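/- Let E be a finite set, let w : E → ℝ satisfy w(e) > 0 for every e ∈ E, let C be a collection of subsets of E (the feasible solutions), and let y ∈ C satisfy ∑_{e ∈ y} w(e) ≤ ∑_{e ∈ y'} w(e) for every y' ∈ C (y is an optimal solution). Let α ∈ ℝ be arbitrary. Then for every sequence of score vectors sₙ : E → ℝ such that sₙ(e) → +∞ for every e ∈ y and sₙ(e) → −∞ for every e ∉ y, there exists N such that for all n ≥ N: every feasible solution y' ∈ C satisfying ∑_{e ∈ y'} w(e)·(1 − σ(sₙ(e))) ≤ α · ∑_{e ∈ y} w(e)·(1 − σ(sₙ(e))) must equal y. (This is the mathematical core of Theorem 2: any probabilistic approximation algorithm whose output on the modified graph, with edge weights w(e)·(1 − σ(s(e))), always satisfies the relative error bound with factor α can, in the limit σ(s) → y, only output the optimal solution y.) -/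

import Mathlib

open Filter Finset

/-- The logistic sigmoid function `σ(x) = exp x / (1 + exp x)`. -/
noncomputable def sigmoid (x : ℝ) : ℝ := Real.exp x / (1 + Real.exp x)

lemma one_add_exp_pos (x : ℝ) : (0:ℝ) < 1 + Real.exp x := by positivity

lemma sigmoid_pos (x : ℝ) : 0 < sigmoid x := by
  unfold sigmoid; positivity

lemma sigmoid_lt_one (x : ℝ) : sigmoid x < 1 := by
  unfold sigmoid
  rw [div_lt_one (one_add_exp_pos x)]
  linarith

lemma one_sub_sigmoid (x : ℝ) : 1 - sigmoid x = 1 / (1 + Real.exp x) := by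
  unfold sigmoid
  field_simp
  ring

lemma tendsto_one_sub_sigmoid : Tendsto (fun x => 1 - sigmoid x) atTop (nhds 0) := by
  simp only [one_sub_sigmoid]
  apply Tendsto.div_atTop tendsto_const_nhds
  exact tendsto_atTop_add_const_left _ 1 Real.tendsto_exp_atTop

lemma tendsto_sigmoid_atBot : Tendsto sigmoid atBot (nhds 0) := by
  unfold sigmoid
  have h1 : Tendsto (fun x : ℝ => Real.exp x) atBot (nhds 0) := Real.tendsto_exp_atBot
  have h2 : Tendsto (fun x : ℝ => 1 + Real.exp x) atBot (nhds 1) := by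
    simpa using (tendsto_const_nhds (x := (1:ℝ)) (f := atBot)).add h1
  rw [show (0:ℝ) = 0 / 1 by norm_num]
  exact h1.div h2 one_ne_zero

/-- **Theorem 2 (core).** Let `y ∈ C` be an optimal solution (minimum total positive
weight) and `α ∈ ℝ` arbitrary. If the scores `sₙ(e) → +∞` for `e ∈ y` and
`sₙ(e) → −∞` for `e ∉ y`, then eventually every feasible solution `y' ∈ C` whose
modified objective `∑_{e ∈ y'} w e * (1 − σ(sₙ e))` satisfies the relative error
bound with factor `α` (relative to the modified objective of `y`) must equal `y`. -/
theorem approx_with_relative_error_bound_eventually_optimal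
    {E : Type*} [Fintype E] [DecidableEq E]
    (w : E → ℝ) (hw : ∀ e, 0 < w e)
    (C : Set (Finset E)) (y : Finset E) (hy : y ∈ C)
    (hopt : ∀ y' ∈ C, ∑ e ∈ y, w e ≤ ∑ e ∈ y', w e)
    (α : ℝ)
    (s : ℕ → E → ℝ)
    (hyTop : ∀ e ∈ y, Tendsto (fun n => s n e) atTop atTop)
    (hyBot : ∀ e ∉ y, Tendsto (fun n => s n e) atTop atBot) :
    ∃ N : ℕ, ∀ n ≥ N, ∀ y' ∈ C,
      (∑ e ∈ y', w e * (1 - sigmoid (s n e))) ≤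
          α * ∑ e ∈ y, w e * (1 - sigmoid (s n e)) →
        y' = y := by
  -- the modified objective of y tends to 0
  have hA : Tendsto (fun n => ∑ e ∈ y, w e * (1 - sigmoid (s n e))) atTop (nhds 0) := by
    have : Tendsto (fun n => ∑ e ∈ y, w e * (1 - sigmoid (s n e))) atTop
        (nhds (∑ e ∈ y, w e * 0)) := by
      apply tendsto_finset_sum
      intro e he
      exact tendsto_const_nhds.mul (tendsto_one_sub_sigmoid.comp (hyTop e he))
    simpa using this
  have hαA : Tendsto (fun n => α * ∑ e ∈ y, w e * (1 - sigmoid (s n e))) atTop (nhds 0) := by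
    simpa using tendsto_const_nhds.mul hA
  -- the key eventual statement, proven for each fixed y'
  have key : ∀ᶠ n in atTop, ∀ y' : Finset E, y' ∈ C →
      (∑ e ∈ y', w e * (1 - sigmoid (s n e))) ≤
        α * ∑ e ∈ y, w e * (1 - sigmoid (s n e)) → y' = y := by
    refine eventually_all.2 fun y' => ?_
    by_cases hC : y' ∈ C
    · by_cases hyy : y' = y
      · filter_upwards with n _ _; exact hyy
      · -- y' ≠ y, so y' is not a subset of y (else contradiction with optimality)
        have hns : ¬ y' ⊆ y := by
          intro hsub
          have hss : y' ⊂ y := hsub.ssubset_of_ne hyy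
          obtain ⟨e, hey, hey'⟩ := Finset.exists_of_ssubset hss
          have : ∑ e ∈ y', w e < ∑ e ∈ y, w e :=
            Finset.sum_lt_sum_of_subset hsub hey hey' (hw e)
              (fun i _ _ => (hw i).le)
          linarith [hopt y' hC]
        obtain ⟨e, hey', hey⟩ := Finset.not_subset.mp hns
        -- the term for e tends to w e
        have hterm : Tendsto (fun n => w e * (1 - sigmoid (s n e))) atTop (nhds (w e)) := by
          have hs : Tendsto (fun n => sigmoid (s n e)) atTop (nhds 0) :=
            tendsto_sigmoid_atBot.comp (hyBot e hey)
          have : Tendsto (fun n => w e * (1 - sigmoid (s n e))) atTop (nhds (w e * (1 - 0))) :=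
            tendsto_const_nhds.mul (tendsto_const_nhds.sub hs)
          simpa using this
        have h1 : ∀ᶠ n in atTop, w e / 2 < w e * (1 - sigmoid (s n e)) :=
          hterm.eventually (eventually_gt_nhds (by linarith [hw e]))
        have h2 : ∀ᶠ n in atTop,
            α * ∑ e ∈ y, w e * (1 - sigmoid (s n e)) < w e / 2 :=
          hαA.eventually (eventually_lt_nhds (by linarith [hw e]))
        filter_upwards [h1, h2] with n hn1 hn2 _ hle
        exfalso
        have hge : w e * (1 - sigmoid (s n e)) ≤ ∑ e ∈ y', w e * (1 - sigmoid (s n e)) := by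
          apply Finset.single_le_sum (f := fun e => w e * (1 - sigmoid (s n e))) _ hey'
          intro i _
          show 0 ≤ w i * (1 - sigmoid (s n i))
          have := sigmoid_lt_one (s n i)
          nlinarith [hw i]
        linarith
    · filter_upwards with n h; exact absurd h hC
  obtain ⟨N, hN⟩ := eventually_atTop.mp key
  exact ⟨N, fun n hn y' hC hle => hN n hn y' hC hle⟩
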